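/- Let λ ∈ P⁺ be a dominant integral weight such that V(λ) occurs as an irreducible G-subrepresentation of the total cohomology H•(G/B, ∧•𝒯_{G/B}) of the sheaf of polyvector fields on the flag variety G/B. Then λ ≤ 2ρ in the dominance order. -/

import Mathlib

open scoped BigOperators

namespace KostantHH

/-- The integral weight lattice of a rank-`ℓ` simple, simply-connected group /
simple Lie algebra, written in fundamental-weight coordinates (so the
fundamental weights `ϖᵢ` are the standard basis vectors, and pairing a weight
with the `i`-th simple coroot is taking its `i`-th coordinate). -/
abbrev P (ℓ : ℕ) := Fin ℓ → ℤ

/-- The group algebra `ℤ[P]` of the weight lattice. -/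
abbrev R (ℓ : ℕ) := AddMonoidAlgebra ℤ (P ℓ)

/-- `e μ` is the basis element `e^μ` of `ℤ[P]`. -/
noncomputable def e {ℓ : ℕ} (μ : P ℓ) : R ℓ := AddMonoidAlgebra.single μ 1

/-- The Weyl vector `ρ = ϖ₁ + ⋯ + ϖ_ℓ`, i.e. `(1,…,1)` in fundamental-weight
coordinates. -/
def ρ {ℓ : ℕ} : P ℓ := fun _ => 1

/-- A weight is dominant iff all its fundamental-weight coordinates (= pairings
with the simple coroots) are nonnegative. -/
def dominant {ℓ : ℕ} (lam : P ℓ) : Prop := ∀ i, 0 ≤ lam i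

/-- The combinatorial root datum of a finite-dimensional simple complex Lie
algebra `𝔤` of rank `ℓ`: the simple roots `α i` (written in fundamental-weight
coordinates, so that `α i j = ⟨α i, αⱼ^∨⟩` is the Cartan matrix) and the set
`Φpos` of positive roots, whose sum is `2ρ`. -/
structure RootDatum (ℓ : ℕ) where
  α : Fin ℓ → P ℓ
  cartan_diag : ∀ i, α i i = 2
  cartan_offdiag : ∀ i j, i ≠ j → α i j ≤ 0
  Φpos : Finset (P ℓ)
  simple_mem : ∀ i, α i ∈ Φpos
  pos_in_cone : ∀ β ∈ Φpos, ∃ c : Fin ℓ → ℕ, β = ∑ i, (c i : ℤ) • α i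
  sum_pos_roots : ∑ β ∈ Φpos, β = (2 : ℤ) • ρ

/-- The dominance (Bruhat–Chevalley) order on weights: `λ ≤ μ` iff `μ - λ` is a
nonnegative integral combination of the simple roots (i.e. lies in `Q⁺`). -/
def domle {ℓ : ℕ} (S : RootDatum ℓ) (lam mu : P ℓ) : Prop :=
  ∃ c : Fin ℓ → ℕ, mu - lam = ∑ i, (c i : ℤ) • S.α i

/-- The simple reflection `sᵢ(μ) = μ - ⟨μ, αᵢ^∨⟩ αᵢ`, as an automorphism of the
weight lattice. -/
def sRefl {ℓ : ℕ} (S : RootDatum ℓ) (i : Fin ℓ) : AddAut (P ℓ) where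
  toFun μ := μ - μ i • S.α i
  invFun μ := μ - μ i • S.α i
  left_inv := by
    intro μ
    funext j
    simp only [Pi.sub_apply, Pi.smul_apply, smul_eq_mul]
    rw [S.cartan_diag i]
    ring
  right_inv := by
    intro μ
    funext j
    simp only [Pi.sub_apply, Pi.smul_apply, smul_eq_mul]
    rw [S.cartan_diag i]
    ring
  map_add' := by
    intro μ ν
    funext j
    simp only [Pi.add_apply, Pi.sub_apply, Pi.smul_apply, smul_eq_mul]
    ring

/-- The Weyl group `W`, realized as the subgroup of automorphisms of the weight
lattice generated by the simple reflections. -/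
def Wgrp {ℓ : ℕ} (S : RootDatum ℓ) : AddSubgroup (AddAut (P ℓ)) :=
  AddSubgroup.closure (Set.range (sRefl S))

/-- `w₀` is the longest element of the Weyl group: the (unique) element sending
all positive roots to negative roots. -/
def IsLongest {ℓ : ℕ} (S : RootDatum ℓ) (w₀ : AddAut (P ℓ)) : Prop :=
  w₀ ∈ Wgrp S ∧ ∀ β ∈ S.Φpos, -(w₀ β) ∈ S.Φpos

/-- The action of a Weyl group element on the group algebra `ℤ[P]`,
`w(e^μ) := e^{w μ}`. -/
noncomputable def wact {ℓ : ℕ} (w : AddAut (P ℓ)) (f : R ℓ) : R ℓ :=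
  AddMonoidAlgebra.mapDomain (⇑w) f

/-- The involution `◇` of `ℤ[P]`, determined by `◇(e^μ) = e^{-μ}`. -/
noncomputable def dia {ℓ : ℕ} (f : R ℓ) : R ℓ :=
  AddMonoidAlgebra.mapDomain (fun μ : P ℓ => -μ) f

/-- The shifted (dot) action of the Weyl group on weights:
`w · λ = w(λ + ρ) - ρ`. -/
def dot {ℓ : ℕ} (w : AddAut (P ℓ)) (lam : P ℓ) : P ℓ := w (lam + ρ) - ρ

/-- `D` is the `i`-th Demazure operator `Dᵢ(f) = (f - e^{-αᵢ}·sᵢ(f))/(1 - e^{-αᵢ})`,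
characterized by the equation `Dᵢ(f)·(1 - e^{-αᵢ}) = f - e^{-αᵢ}·sᵢ(f)`. -/
def IsDemazure {ℓ : ℕ} (S : RootDatum ℓ) (i : Fin ℓ) (D : Module.End ℤ (R ℓ)) : Prop :=
  ∀ f : R ℓ, D f * (1 - e (-(S.α i))) = f - e (-(S.α i)) * wact (sRefl S i) f

/-- `Dw0` is the Demazure operator `D_{w₀} = D_{i₁} ∘ ⋯ ∘ D_{i_k}` attached to a
reduced word `w₀ = s_{i₁} ⋯ s_{i_k}` for the longest element `w₀` (a word for
`w₀` is reduced iff its length is `#Φ⁺ = ℓ(w₀)`). -/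
def IsDw0 {ℓ : ℕ} (S : RootDatum ℓ) (w₀ : AddAut (P ℓ))
    (Dw0 : Module.End ℤ (R ℓ)) : Prop :=
  ∃ (word : List (Fin ℓ)) (D : Fin ℓ → Module.End ℤ (R ℓ)),
    (∀ i, IsDemazure S i (D i)) ∧
    (word.map (sRefl S)).sum = w₀ ∧
    word.length = S.Φpos.card ∧
    Dw0 = (word.map D).prod

/-- The characters of the finite-dimensional irreducible highest weight
`𝔤`-modules `V(λ)`: `chV λ = ch V(λ) = ∑_μ (dim V(λ)_μ) e^μ ∈ ℤ[P]` for
dominant `λ`.  The recorded axioms express that `V(λ)` is a `𝔤`-module with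
highest weight `λ` occurring with multiplicity one: weight multiplicities are
nonnegative, the coefficient of `e^λ` is `1`, all weights are `≤ λ` in
dominance order, and the character is Weyl-group invariant. -/
structure CharTheory {ℓ : ℕ} (S : RootDatum ℓ) where
  chV : P ℓ → R ℓ
  chV_coeff_nonneg : ∀ lam μ, 0 ≤ (chV lam).coeff μ
  chV_self : ∀ lam, dominant lam → (chV lam).coeff lam = 1
  chV_support_le : ∀ lam, dominant lam → ∀ μ ∈ (chV lam).coeff.support, domle S μ lam
  chV_invariant : ∀ lam, dominant lam → ∀ i, wact (sRefl S i) (chV lam) = chV lam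

/-- `g ∈ ℤ[P]` is the character of a finite-dimensional `𝔤`-module, i.e. a sum
of characters of irreducibles `V(μ)` with `μ` dominant. -/
def IsChar {ℓ : ℕ} {S : RootDatum ℓ} (T : CharTheory S) (g : R ℓ) : Prop :=
  ∃ l : List (P ℓ), (∀ μ ∈ l, dominant μ) ∧ g = (l.map T.chV).sum

/-- The irreducible `V(λ)` occurs with multiplicity at least `m` in the
(semisimple, finite-dimensional) `𝔤`-module with character `g`. -/
def OccursWithMult {ℓ : ℕ} {S : RootDatum ℓ} (T : CharTheory S) (m : ℕ)
    (lam : P ℓ) (g : R ℓ) : Prop :=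
  ∃ h : R ℓ, IsChar T h ∧ g = (m : ℤ) • T.chV lam + h

/-- The irreducible `V(λ)` occurs as a subrepresentation of the (semisimple,
finite-dimensional) `𝔤`-module with character `g`. -/
def Occurs {ℓ : ℕ} {S : RootDatum ℓ} (T : CharTheory S) (lam : P ℓ) (g : R ℓ) : Prop :=
  OccursWithMult T 1 lam g


/-!
Since `∧•𝒯 = 𝓛(∧•𝔲)` has the weights `-∑_{β ∈ A} β` for `A ⊆ Φ⁺`, the module `V(λ)` occurs in
some `H•(G/B, 𝓛(∑_A β))`, which by Borel–Weil–Bott is `V(μ)` with `μ = -w₀ (w · ∑_A β)`; so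
`λ ≤ μ`. As `-w₀` preserves `Q⁺` and fixes `2ρ`, it remains to show `w (∑_A β + ρ) ≤ 3ρ`. Now
`∑_A β + ρ = ρ + (ρ - ∑_{Φ⁺ \ A} β) + ρ` is a weight of the `W`-invariant character
`(ch V(ρ))³ = (e^ρ ∏_{β ∈ Φ⁺} (1 + e^{-β}))³`, all of whose weights are `≤ 3ρ`; hence so is its
image under `w`. Finally `μ` is dominant because `ν := w · ∑_A β` dominates its `W`-orbit and
`Q⁺ ∩ -Q⁺ = 0`, which holds as `2ρ` is a positive combination of the simple roots whose Cartan
matrix has nonpositive off-diagonal entries.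
-/

section PositiveCone

variable {ℓ : ℕ} (S : RootDatum ℓ)

def posCone : Submodule ℕ (P ℓ) := Submodule.span ℕ (Set.range S.α)

variable {S}

lemma mem_posCone_iff {x : P ℓ} : x ∈ posCone S ↔ ∃ c : Fin ℓ → ℕ, x = ∑ i, (c i : ℤ) • S.α i := by
  simp only [posCone, Submodule.mem_span_range_iff_exists_fun, natCast_zsmul, eq_comm]

lemma domle_iff {lam mu : P ℓ} : domle S lam mu ↔ mu - lam ∈ posCone S :=
  mem_posCone_iff.symm

lemma simpleRoot_mem_posCone (i : Fin ℓ) : S.α i ∈ posCone S :=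
  Submodule.subset_span ⟨i, rfl⟩

lemma posRoot_mem_posCone {β : P ℓ} (hβ : β ∈ S.Φpos) : β ∈ posCone S :=
  mem_posCone_iff.2 (S.pos_in_cone β hβ)

lemma sum_mem_posCone {A : Finset (P ℓ)} (hA : A ⊆ S.Φpos) : ∑ β ∈ A, β ∈ posCone S :=
  Submodule.sum_mem _ fun _ hβ => posRoot_mem_posCone (hA hβ)

lemma sum_smul_simpleRoot_apply_nonpos {v : Fin ℓ → ℤ} (hv : ∀ k, 0 ≤ v k) {j : Fin ℓ}
    (hj : v j = 0) : (∑ k, v k • S.α k) j ≤ 0 := by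
  rw [Finset.sum_apply]
  refine Finset.sum_nonpos fun k _ => ?_
  rcases eq_or_ne k j with rfl | hkj
  · simp [hj]
  · exact mul_nonpos_of_nonneg_of_nonpos (hv k) (S.cartan_offdiag k j hkj)

lemma exists_pos_coeffs_two_rho :
    ∃ C : Fin ℓ → ℕ, ∑ i, (C i : ℤ) • S.α i = (2 : ℤ) • ρ ∧ ∀ j, 0 < C j := by
  obtain ⟨C, hC⟩ := mem_posCone_iff.1 (S.sum_pos_roots ▸ sum_mem_posCone (subset_refl S.Φpos))
  refine ⟨C, hC.symm, fun j => Nat.pos_of_ne_zero fun hj => ?_⟩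
  have := sum_smul_simpleRoot_apply_nonpos (S := S) (v := fun i => (C i : ℤ)) (by simp)
    (j := j) (by simp [hj])
  rw [← hC] at this
  simp [ρ] at this

lemma eq_zero_of_sum_nsmul_simpleRoot_eq_zero {m : Fin ℓ → ℕ}
    (hm : ∑ i, (m i : ℤ) • S.α i = 0) : m = 0 := by
  funext i
  obtain ⟨C, hC, hCpos⟩ := exists_pos_coeffs_two_rho (S := S)
  -- Compare `m` with the multiple of `C` touching it at an index `j` of maximal ratio `m j / C j`.
  obtain ⟨j, -, hj⟩ := Finset.exists_max_image Finset.univ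
    (fun k => (m k : ℚ) / C k) ⟨i, Finset.mem_univ i⟩
  have hratio : ∀ k, (C j : ℤ) * m k ≤ m j * C k := fun k => by
    have := hj k (Finset.mem_univ k)
    rw [div_le_div_iff₀ (by exact_mod_cast hCpos k) (by exact_mod_cast hCpos j)] at this
    exact_mod_cast (by linarith : (C j : ℚ) * m k ≤ m j * C k)
  have hcomb : ∑ k, ((m j : ℤ) * C k - C j * m k) • S.α k = (m j : ℤ) • (2 : ℤ) • ρ := by
    simp only [sub_smul, mul_smul, Finset.sum_sub_distrib, ← Finset.smul_sum, hC, hm,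
      smul_zero, sub_zero]
  have hnonpos := sum_smul_simpleRoot_apply_nonpos (S := S) (j := j)
    (fun k => sub_nonneg.2 (hratio k)) (by ring)
  rw [hcomb] at hnonpos
  have hmj : m j = 0 := by simp [ρ] at hnonpos; omega
  have hi := hratio i
  rw [hmj, Nat.cast_zero, zero_mul] at hi
  exact_mod_cast le_antisymm (nonpos_of_mul_nonpos_right hi (by exact_mod_cast hCpos j))
    (Int.natCast_nonneg _)

lemma eq_zero_of_mem_posCone_of_neg_mem {x : P ℓ} (hx : x ∈ posCone S) (hnx : -x ∈ posCone S) :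
    x = 0 := by
  obtain ⟨c, rfl⟩ := mem_posCone_iff.1 hx
  obtain ⟨d, hd⟩ := mem_posCone_iff.1 hnx
  have hcd : c + d = 0 := eq_zero_of_sum_nsmul_simpleRoot_eq_zero (S := S) (by
    simp only [Pi.add_apply, Nat.cast_add, add_smul, Finset.sum_add_distrib, ← hd,
      add_neg_cancel])
  simp [(add_eq_zero.1 hcd).1]

lemma nonneg_of_zsmul_simpleRoot_mem_posCone {n : ℤ} {i : Fin ℓ} (h : n • S.α i ∈ posCone S) :
    0 ≤ n := by
  by_contra! hn
  have hneg : -(n • S.α i) ∈ posCone S := by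
    rw [← neg_smul, ← Int.toNat_of_nonneg (by omega : 0 ≤ -n), natCast_zsmul]
    exact Submodule.smul_of_tower_mem _ _ (simpleRoot_mem_posCone i)
  have := congr_fun (eq_zero_of_mem_posCone_of_neg_mem h hneg) i
  simp [S.cartan_diag i] at this
  omega

end PositiveCone

section LongestElement

variable {ℓ : ℕ} {S : RootDatum ℓ} {w₀ : AddAut (P ℓ)}

lemma IsLongest.neg_apply_mem_posCone (hw₀ : IsLongest S w₀) {x : P ℓ} (hx : x ∈ posCone S) :
    -(w₀ x) ∈ posCone S := by
  induction hx using Submodule.span_induction with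
  | mem x hx =>
    obtain ⟨i, rfl⟩ := hx
    exact posRoot_mem_posCone (hw₀.2 _ (S.simple_mem i))
  | zero => simp
  | add x y _ _ hx hy =>
    rw [map_add, neg_add]
    exact add_mem hx hy
  | smul n x _ hx =>
    rw [map_nsmul, ← smul_neg]
    exact Submodule.smul_mem _ n hx

lemma IsLongest.neg_apply_two_rho (hw₀ : IsLongest S w₀) :
    -(w₀ ((2 : ℤ) • ρ)) = (2 : ℤ) • ρ := by
  have hinj : Function.Injective fun β : P ℓ => -(w₀ β) := neg_injective.comp w₀.injective
  have himage : S.Φpos.image (fun β => -(w₀ β)) = S.Φpos :=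
    Finset.eq_of_subset_of_card_le (Finset.image_subset_iff.2 hw₀.2)
      (Finset.card_image_of_injective _ hinj).ge
  conv_rhs => rw [← S.sum_pos_roots, ← himage, Finset.sum_image fun x _ y _ h => hinj h]
  rw [← S.sum_pos_roots, map_sum, Finset.sum_neg_distrib]

end LongestElement

section Coefficients

variable {k G : Type*} [Semiring k] [PartialOrder k] [IsStrictOrderedRing k] [AddGroup G]
  {f g : AddMonoidAlgebra k G}

lemma coeff_mul_nonneg (hf : ∀ x, 0 ≤ f.coeff x) (hg : ∀ x, 0 ≤ g.coeff x) (x : G) :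
    0 ≤ (f * g).coeff x := by
  rw [AddMonoidAlgebra.coeff_mul_apply_left]
  exact Finset.sum_nonneg fun a _ => mul_nonneg (hf a) (hg _)

lemma add_mem_support_coeff_mul (hf : ∀ x, 0 ≤ f.coeff x) (hg : ∀ x, 0 ≤ g.coeff x) {a b : G}
    (ha : a ∈ f.coeff.support) (hb : b ∈ g.coeff.support) :
    a + b ∈ (f * g).coeff.support := by
  rw [Finsupp.mem_support_iff] at ha hb ⊢
  refine (lt_of_lt_of_le (mul_pos ((hf a).lt_of_ne' ha) ((hg b).lt_of_ne' hb)) ?_).ne'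
  rw [AddMonoidAlgebra.coeff_mul_apply_left]
  have := Finset.single_le_sum (f := fun a' => f.coeff a' * g.coeff (-a' + (a + b)))
    (fun a' _ => mul_nonneg (hf a') (hg _)) (Finsupp.mem_support_iff.2 ha)
  simpa only [neg_add_cancel_left, Finsupp.sum] using this

end Coefficients

section WeylAction

variable {ℓ : ℕ}

lemma coeff_wact_apply (u : AddAut (P ℓ)) (f : R ℓ) (x : P ℓ) :
    (wact u f).coeff (u x) = f.coeff x :=
  Finsupp.mapDomain_apply u.injective f.coeff x

lemma apply_mem_support_of_wact_eq {u : AddAut (P ℓ)} {f : R ℓ} (hu : wact u f = f) {x : P ℓ}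
    (hx : x ∈ f.coeff.support) : u x ∈ f.coeff.support := by
  rwa [Finsupp.mem_support_iff, ← hu, coeff_wact_apply, ← Finsupp.mem_support_iff]

lemma wact_zero (f : R ℓ) : wact 0 f = f := by
  apply AddMonoidAlgebra.coeff_injective
  exact Finsupp.mapDomain_id

lemma wact_add (u v : AddAut (P ℓ)) (f : R ℓ) : wact (u + v) f = wact u (wact v f) := by
  apply AddMonoidAlgebra.coeff_injective
  exact Finsupp.mapDomain_comp (f := v) (g := u) (v := f.coeff)

lemma wact_mul (u : AddAut (P ℓ)) (f g : R ℓ) : wact u (f * g) = wact u f * wact u g :=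
  AddMonoidAlgebra.mapDomain_mul u f g

lemma wact_eq_self_of_mem_Wgrp {S : RootDatum ℓ} {f : R ℓ} (hf : ∀ i, wact (sRefl S i) f = f)
    {u : AddAut (P ℓ)} (hu : u ∈ Wgrp S) : wact u f = f := by
  induction hu using AddSubgroup.closure_induction with
  | mem u hu =>
    obtain ⟨i, rfl⟩ := hu
    exact hf i
  | zero => exact wact_zero f
  | add u v _ _ hu hv => rw [wact_add, hv, hu]
  | neg u _ hu => conv_lhs => rw [← hu, ← wact_add, neg_add_cancel, wact_zero]

end WeylAction

section Characters

variable {ℓ : ℕ} {S : RootDatum ℓ}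

lemma IsChar.coeff_nonneg {T : CharTheory S} {g : R ℓ} (hg : IsChar T g) (x : P ℓ) :
    0 ≤ g.coeff x := by
  obtain ⟨l, -, rfl⟩ := hg
  induction l with
  | nil => simp
  | cons μ l ih =>
    rw [List.map_cons, List.sum_cons, AddMonoidAlgebra.coeff_add, Finsupp.add_apply]
    exact add_nonneg (T.chV_coeff_nonneg μ x) ih

lemma Occurs.coeff_pos {T : CharTheory S} {lam : P ℓ} {g : R ℓ} (hocc : Occurs T lam g)
    (hlam : dominant lam) : 0 < g.coeff lam := by
  obtain ⟨h, hh, rfl⟩ := hocc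
  rw [AddMonoidAlgebra.coeff_add, Finsupp.add_apply, Nat.cast_one, one_smul, T.chV_self lam hlam]
  linarith [hh.coeff_nonneg lam]

lemma CharTheory.sub_apply_mem_posCone (T : CharTheory S) {ν : P ℓ} (hν : dominant ν)
    {u : AddAut (P ℓ)} (hu : u ∈ Wgrp S) : ν - u ν ∈ posCone S := by
  have hinv := wact_eq_self_of_mem_Wgrp (T.chV_invariant ν hν) hu
  have hmem : ν ∈ (T.chV ν).coeff.support := by simp [T.chV_self ν hν]
  exact domle_iff.1 (T.chV_support_le ν hν _ (apply_mem_support_of_wact_eq hinv hmem))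

lemma CharTheory.dominant_neg_apply (T : CharTheory S) {w₀ : AddAut (P ℓ)}
    (hw₀ : IsLongest S w₀) {ν : P ℓ} (hν : dominant ν) : dominant (-(w₀ ν)) := by
  intro i
  -- Apply `ν ≥ u ν` to `u = w₀⁻¹ sᵢ w₀` and transport it by `-w₀`.
  have hu : -w₀ + (sRefl S i + w₀) ∈ Wgrp S :=
    add_mem (neg_mem hw₀.1) (add_mem (AddSubgroup.subset_closure ⟨i, rfl⟩) hw₀.1)
  have hcone := hw₀.neg_apply_mem_posCone (T.sub_apply_mem_posCone hν hu)
  rw [map_sub, AddAut.add_apply, AddAut.add_apply, AddAut.apply_neg_self] at hcone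
  refine nonneg_of_zsmul_simpleRoot_mem_posCone (S := S) (i := i) ?_
  convert hcone using 1
  change _ = -(w₀ ν - (w₀ ν - (w₀ ν) i • S.α i))
  rw [Pi.neg_apply, neg_smul]
  abel

end Characters

section WeylVectorCharacter

variable {ℓ : ℕ} {S : RootDatum ℓ}

lemma e_add (x y : P ℓ) : e (x + y) = e x * e y := by
  rw [e, e, e, AddMonoidAlgebra.single_mul_single, one_mul]

lemma prod_e {ι : Type*} (s : Finset ι) (f : ι → P ℓ) : ∏ i ∈ s, e (f i) = e (∑ i ∈ s, f i) := by
  classical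
  induction s using Finset.induction_on with
  | empty => rfl
  | insert i s hi ih => rw [Finset.prod_insert hi, Finset.sum_insert hi, ih, e_add]

lemma coeff_e (x y : P ℓ) : (e x).coeff y = if x = y then 1 else 0 :=
  Finsupp.single_apply

lemma chV_rho_eq_sum {T : CharTheory S} (hchρ : T.chV ρ = e ρ * ∏ β ∈ S.Φpos, (1 + e (-β))) :
    T.chV ρ = ∑ A ∈ S.Φpos.powerset, e (ρ - ∑ β ∈ A, β) := by
  simp only [hchρ, add_comm (1 : R ℓ), Finset.prod_add, Finset.prod_const_one, mul_one, prod_e,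
    Finset.mul_sum, ← e_add, Finset.sum_neg_distrib (f := fun β => β), sub_eq_add_neg]

def WeightsLE (S : RootDatum ℓ) (f : R ℓ) (a : P ℓ) : Prop :=
  ∀ y ∈ f.coeff.support, domle S y a

lemma WeightsLE.mul {f g : R ℓ} {a b : P ℓ} (hf : WeightsLE S f a) (hg : WeightsLE S g b) :
    WeightsLE S (f * g) (a + b) := by
  intro y hy
  obtain ⟨x, hx, z, hz, rfl⟩ := Finset.mem_add.1 (AddMonoidAlgebra.support_coeff_mul_subset f g hy)
  rw [domle_iff]
  convert add_mem (domle_iff.1 (hf x hx)) (domle_iff.1 (hg z hz)) using 1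
  abel

lemma weightsLE_chV_rho {T : CharTheory S}
    (hchρ : T.chV ρ = e ρ * ∏ β ∈ S.Φpos, (1 + e (-β))) : WeightsLE S (T.chV ρ) ρ := by
  intro y hy
  rw [chV_rho_eq_sum hchρ, Finsupp.mem_support_iff, AddMonoidAlgebra.coeff_sum,
    Finsupp.finsetSum_apply] at hy
  obtain ⟨A, hA, hne⟩ := Finset.exists_ne_zero_of_sum_ne_zero hy
  rw [coeff_e] at hne
  obtain rfl : ρ - ∑ β ∈ A, β = y := by by_contra h; simp [h] at hne
  rw [domle_iff, sub_sub_cancel]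
  exact sum_mem_posCone (Finset.mem_powerset.1 hA)

lemma rho_sub_sum_mem_support_chV_rho {T : CharTheory S}
    (hchρ : T.chV ρ = e ρ * ∏ β ∈ S.Φpos, (1 + e (-β))) {A : Finset (P ℓ)} (hA : A ⊆ S.Φpos) :
    ρ - ∑ β ∈ A, β ∈ (T.chV ρ).coeff.support := by
  rw [chV_rho_eq_sum hchρ, Finsupp.mem_support_iff, AddMonoidAlgebra.coeff_sum,
    Finsupp.finsetSum_apply]
  refine (lt_of_lt_of_le ?_ (Finset.single_le_sum (fun B _ => ?_) (Finset.mem_powerset.2 hA))).ne'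
  · simp [coeff_e]
  · rw [coeff_e]
    split_ifs <;> norm_num

lemma two_rho_sub_dot_sum_mem_posCone {T : CharTheory S}
    (hchρ : T.chV ρ = e ρ * ∏ β ∈ S.Φpos, (1 + e (-β))) {A : Finset (P ℓ)} (hA : A ⊆ S.Φpos)
    {w : AddAut (P ℓ)} (hw : w ∈ Wgrp S) : (2 : ℤ) • ρ - dot w (∑ β ∈ A, β) ∈ posCone S := by
  have hρ : dominant (ρ : P ℓ) := fun _ => zero_le_one
  have hnonneg := T.chV_coeff_nonneg ρ
  have hself : ρ ∈ (T.chV ρ).coeff.support := by simp [T.chV_self ρ hρ]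
  set F := T.chV ρ * T.chV ρ * T.chV ρ
  have hinv : wact w F = F := wact_eq_self_of_mem_Wgrp (fun i => by
    simp only [F, wact_mul, T.chV_invariant ρ hρ i]) hw
  have hmem : (∑ β ∈ A, β) + ρ ∈ F.coeff.support := by
    have hsplit : (∑ β ∈ A, β) + ρ = ρ + (ρ - ∑ β ∈ S.Φpos \ A, β) + ρ := by
      rw [Finset.sum_sdiff_eq_sub hA, S.sum_pos_roots, two_zsmul]
      abel
    rw [hsplit]
    exact add_mem_support_coeff_mul (coeff_mul_nonneg hnonneg hnonneg) hnonneg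
      (add_mem_support_coeff_mul hnonneg hnonneg hself
        (rho_sub_sum_mem_support_chV_rho hchρ Finset.sdiff_subset)) hself
  have hbound := ((weightsLE_chV_rho hchρ).mul (weightsLE_chV_rho hchρ)).mul
    (weightsLE_chV_rho hchρ) _ (apply_mem_support_of_wact_eq hinv hmem)
  rw [domle_iff] at hbound
  convert hbound using 1
  rw [dot, two_zsmul]
  abel

end WeylVectorCharacter

/-- Here `∧•𝒯_{G/B} = 𝓛(∧•𝔲)` where `𝔲` is spanned by the negative root spaces, so
the multiset of weights of the `B`-module `∧•𝔲` is
`grT = { -∑_{β ∈ A} β : A ⊆ Φ⁺ }` (hypothesis `hgrT`); `Hgr ξ` is the character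
of `H•(G/B, 𝓛(-ξ))`, constrained by the Borel–Weil–Bott theorem (`hBWB`); `HT`
is the character of `H•(G/B, ∧•𝒯_{G/B})`, a quotient of `⊕_{ξ} H•(G/B, 𝓛(-ξ))`
(`hsurj`); and `hchρ` records the character formula
`ch V(ρ) = e^ρ ∏_{β∈Φ⁺}(1+e^{-β})`. -/
theorem occurs_in_polyvector_cohomology_le_two_rho
    {ℓ : ℕ} (S : RootDatum ℓ) (T : CharTheory S)
    (w₀ : AddAut (P ℓ)) (hw₀ : IsLongest S w₀)
    (hchρ : T.chV ρ = e ρ * ∏ β ∈ S.Φpos, (1 + e (-β)))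
    (grT : Multiset (P ℓ))
    (hgrT : grT = S.Φpos.powerset.val.map (fun A => -(∑ β ∈ A, β)))
    (Hgr : P ℓ → R ℓ)
    (hBWB : ∀ ξ ∈ grT, Hgr ξ = 0 ∨ ∃ w ∈ Wgrp S, dominant (dot w (-ξ)) ∧
      Hgr ξ = T.chV (-(w₀ (dot w (-ξ)))))
    (HT : R ℓ)
    (hsurj : ∃ h : R ℓ, IsChar T h ∧ (grT.map Hgr).sum = HT + h)
    (lam : P ℓ) (hlam : dominant lam)
    (hocc : Occurs T lam HT) :
    domle S lam ((2 : ℤ) • ρ) := by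
  subst hgrT
  obtain ⟨h, hh, hsum⟩ := hsurj
  have hcoeff : (∑ A ∈ S.Φpos.powerset, Hgr (-∑ β ∈ A, β)).coeff lam ≠ 0 := by
    rw [Finset.sum, ← Function.comp_def, ← Multiset.map_map, hsum, AddMonoidAlgebra.coeff_add,
      Finsupp.add_apply]
    linarith [hocc.coeff_pos hlam, hh.coeff_nonneg lam]
  rw [AddMonoidAlgebra.coeff_sum, Finsupp.finsetSum_apply] at hcoeff
  obtain ⟨A, hA, hne⟩ := Finset.exists_ne_zero_of_sum_ne_zero hcoeff
  obtain h0 | ⟨w, hw, hν, hH⟩ := hBWB _ (Multiset.mem_map_of_mem _ hA)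
  · simp [h0] at hne
  rw [neg_neg] at hν hH
  rw [hH] at hne
  have hμ := T.dominant_neg_apply hw₀ hν
  have hlam_le := domle_iff.1 (T.chV_support_le _ hμ lam (Finsupp.mem_support_iff.2 hne))
  have hμ_le := hw₀.neg_apply_mem_posCone
    (two_rho_sub_dot_sum_mem_posCone hchρ (Finset.mem_powerset.1 hA) hw)
  rw [map_sub, neg_sub', hw₀.neg_apply_two_rho] at hμ_le
  rw [domle_iff, ← sub_add_sub_cancel _ (-(w₀ (dot w (∑ β ∈ A, β))))]
  exact add_mem hμ_le hlam_le

end KostantHH
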